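/- Let G be a transitive subgroup of Sym(n), H = Stab_G(1), and suppose the set K of permutations fixing 1 that conjugate some left transversal of H in G to another equals N = N_{Sym(n-1)}(G). Then ict(G,H) = (1/|N|) ∑_{x ∈ N} |Fix(x)|, where Fix(x) = {T a left transversal of H in G with identity : xTx^{-1} = T}; i.e., ict(G,H) is the number of orbits of the conjugation action of N on the set of left transversals with identity. -/

import Mathlib

/-!
An isomorphism `σ` of the left loops of two transversals `T`, `L` of `H = Stab_G(0)` is
realised by the permutation `π i := σ(tᵢ)(0)`, where `tᵢ` is the unique element of `T`
sending `0` to `i`: the loop law `z⁻¹(xy) ∈ H ↔ z 0 = x (y 0)` turns `σ` into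
`π * s * π⁻¹ = σ s` for `s ∈ T`. So two transversals are isomorphic exactly when some
permutation fixing `0` conjugates one onto the other, i.e. (by the hypothesis on `K`) when
they lie in the same orbit of the conjugation action of `N`, and Burnside's lemma counts
these orbits.
-/

/-- A left transversal (with identity) of the subgroup `H` inside the subgroup `K`:
`S ⊆ K`, `1 ∈ S`, and `S` contains exactly one representative of each left coset
of `H` inside `K`. -/
def IsLeftTransversalIn {P : Type*} [Group P] (K H : Subgroup P) (S : Set P) : Prop :=
  (1 : P) ∈ S ∧ S ⊆ (K : Set P) ∧ ∀ g ∈ K, ∃! s, s ∈ S ∧ s⁻¹ * g ∈ H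

/-- `σ` is an isomorphism of the induced left loop structures on left transversals
`T`, `L` of `H`. -/
def IsLeftIso {P : Type*} [Group P] (H : Subgroup P) (T L : Set P) (σ : P → P) : Prop :=
  Set.BijOn σ T L ∧ ∀ x ∈ T, ∀ y ∈ T, ∀ z ∈ T,
    z⁻¹ * (x * y) ∈ H → (σ z)⁻¹ * (σ x * σ y) ∈ H

open Equiv MulAction

theorem MulAction.finsum_natCard_fixedBy_eq_natCard_orbits_mul_natCard_group (G X : Type*)
    [Group G] [MulAction G X] [Finite G] [Finite X] :
    ∑ᶠ g : G, Nat.card (fixedBy X g) = Nat.card (orbitRel.Quotient G X) * Nat.card G := by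
  classical
  have := Fintype.ofFinite G
  have := Fintype.ofFinite X
  simp only [finsum_eq_sum_of_fintype, Nat.card_eq_fintype_card]
  exact sum_card_fixedBy_eq_card_orbits_mul_card_group G X

section Transversal

variable {P : Type*} [Group P] {K H : Subgroup P}

theorem IsLeftTransversalIn.image_mulEquiv {S : Set P} (hS : IsLeftTransversalIn K H S)
    (φ : P ≃* P) (hφK : ∀ g, φ g ∈ K ↔ g ∈ K) (hφH : ∀ h, φ h ∈ H ↔ h ∈ H) :
    IsLeftTransversalIn K H (φ '' S) := by
  have inv_mul_eq : ∀ t g, (φ t)⁻¹ * g = φ (t⁻¹ * φ.symm g) := by simp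
  refine ⟨⟨1, hS.1, map_one φ⟩, ?_, fun g hg => ?_⟩
  · rintro _ ⟨s, hs, rfl⟩
    exact (hφK s).2 (hS.2.1 hs)
  · obtain ⟨t, ⟨htS, htH⟩, huniq⟩ := hS.2.2 (φ.symm g) ((hφK _).1 (by simpa using hg))
    refine ⟨φ t, ⟨⟨t, htS, rfl⟩, by rwa [inv_mul_eq, hφH]⟩, ?_⟩
    rintro _ ⟨⟨t', ht'S, rfl⟩, ht'H⟩
    rw [inv_mul_eq, hφH] at ht'H
    rw [huniq t' ⟨ht'S, ht'H⟩]

theorem isLeftIso_mulEquiv (T : Set P) (φ : P ≃* P) (hφH : ∀ h, φ h ∈ H ↔ h ∈ H) :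
    IsLeftIso H T (φ '' T) φ := by
  refine ⟨φ.injective.injOn.bijOn_image, fun x _ y _ z _ hxyz => ?_⟩
  rwa [← map_inv, ← map_mul, ← map_mul, hφH]

theorem MulAut.coe_conj (x : P) : ⇑(MulAut.conj x) = fun g => x * g * x⁻¹ :=
  funext (MulAut.conj_apply x)

theorem Subgroup.conj_mem_iff_of_mem_normalizer {S : Subgroup P} {x : P}
    (hx : x ∈ Subgroup.normalizer (S : Set P)) (g : P) : MulAut.conj x g ∈ S ↔ g ∈ S :=
  (Subgroup.mem_normalizer_iff.mp hx g).symm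

theorem IsLeftTransversalIn.image_conj {S : Set P} (hS : IsLeftTransversalIn K H S) {x : P}
    (hxK : x ∈ Subgroup.normalizer (K : Set P)) (hxH : x ∈ Subgroup.normalizer (H : Set P)) :
    IsLeftTransversalIn K H ((fun g => x * g * x⁻¹) '' S) := by
  rw [← MulAut.coe_conj]
  exact hS.image_mulEquiv (MulAut.conj x) (Subgroup.conj_mem_iff_of_mem_normalizer hxK)
    (Subgroup.conj_mem_iff_of_mem_normalizer hxH)

theorem isLeftIso_conj (T : Set P) {x : P} (hxH : x ∈ Subgroup.normalizer (H : Set P)) :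
    IsLeftIso H T ((fun g => x * g * x⁻¹) '' T) (fun g => x * g * x⁻¹) := by
  rw [← MulAut.coe_conj]
  exact isLeftIso_mulEquiv T (MulAut.conj x) (Subgroup.conj_mem_iff_of_mem_normalizer hxH)

theorem IsLeftIso.map_one_mem {T L : Set P} {σ : P → P} (hσ : IsLeftIso H T L σ)
    (hT : (1 : P) ∈ T) : σ 1 ∈ H := by
  simpa using hσ.2 1 hT 1 hT 1 hT (by simp)

abbrev conjActionOnTransversals (M : Subgroup P)
    (hM : M ≤ Subgroup.normalizer (K : Set P) ⊓ Subgroup.normalizer (H : Set P)) :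
    MulAction M {S : Set P // IsLeftTransversalIn K H S} where
  smul x S := ⟨(fun g => (x : P) * g * (x : P)⁻¹) '' S.1,
    S.2.image_conj (hM x.2).1 (hM x.2).2⟩
  one_smul S := Subtype.ext <| by
    change (fun g => (1 : P) * g * 1⁻¹) '' S.1 = S.1
    simp
  mul_smul x y S := Subtype.ext <| by
    change (fun g => (x * y : P) * g * (x * y : P)⁻¹) '' S.1 =
      (fun g => (x : P) * g * (x : P)⁻¹) '' ((fun g => (y : P) * g * (y : P)⁻¹) '' S.1)
    simp [Set.image_image, mul_assoc]

end Transversal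

section Perm

variable {α : Type*} {G : Subgroup (Perm α)} {a : α}

theorem inv_mul_mem_inf_stabilizer_iff {s g : Perm α} (hs : s ∈ G) (hg : g ∈ G) :
    s⁻¹ * g ∈ G ⊓ stabilizer (Perm α) a ↔ g a = s a := by
  rw [Subgroup.mem_inf, mem_stabilizer_iff, Perm.smul_def, Perm.mul_apply, Perm.inv_eq_iff_eq]
  exact and_iff_right (mul_mem (inv_mem hs) hg)

theorem IsLeftTransversalIn.existsUnique_apply_eq (htrans : ∀ i, ∃ g ∈ G, g a = i)
    {T : Set (Perm α)} (hT : IsLeftTransversalIn G (G ⊓ stabilizer (Perm α) a) T) (i : α) :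
    ∃! s, s ∈ T ∧ s a = i := by
  obtain ⟨g, hg, rfl⟩ := htrans i
  refine (existsUnique_congr fun s => and_congr_right fun hs => ?_).mp (hT.2.2 g hg)
  rw [inv_mul_mem_inf_stabilizer_iff (hT.2.1 hs) hg, eq_comm]

theorem IsLeftIso.exists_perm_conj_eq (htrans : ∀ i, ∃ g ∈ G, g a = i) {T L : Set (Perm α)}
    (hT : IsLeftTransversalIn G (G ⊓ stabilizer (Perm α) a) T)
    (hL : IsLeftTransversalIn G (G ⊓ stabilizer (Perm α) a) L) {σ : Perm α → Perm α}
    (hσ : IsLeftIso (G ⊓ stabilizer (Perm α) a) T L σ) :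
    ∃ π : Perm α, π a = a ∧ ∀ s ∈ T, π * s * π⁻¹ = σ s := by
  choose t ht using fun i => (hT.existsUnique_apply_eq htrans i).exists
  have t_eq : ∀ s ∈ T, t (s a) = s := fun s hs =>
    (hT.existsUnique_apply_eq htrans (s a)).unique (ht _) ⟨hs, rfl⟩
  have hσG : ∀ s ∈ T, σ s ∈ G := fun s hs => hL.2.1 (hσ.1.mapsTo hs)
  set β : α → α := fun i => σ (t i) a
  have hβ : ∀ s ∈ T, ∀ k, σ s (β k) = β (s k) := by
    intro s hs k
    have hsk : (t (s k))⁻¹ * (s * t k) ∈ G ⊓ stabilizer (Perm α) a := by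
      rw [inv_mul_mem_inf_stabilizer_iff (hT.2.1 (ht _).1) (mul_mem (hT.2.1 hs) (hT.2.1 (ht k).1)),
        Perm.mul_apply, (ht k).2, (ht _).2]
    have := hσ.2 s hs (t k) (ht k).1 (t (s k)) (ht _).1 hsk
    rwa [inv_mul_mem_inf_stabilizer_iff (hσG _ (ht _).1)
      (mul_mem (hσG s hs) (hσG _ (ht k).1))] at this
  have hβ_inj : Function.Injective β := by
    intro i j hij
    have := (hL.existsUnique_apply_eq htrans (β i)).unique
      ⟨hσ.1.mapsTo (ht i).1, rfl⟩ ⟨hσ.1.mapsTo (ht j).1, hij.symm⟩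
    rw [← (ht i).2, ← (ht j).2, hσ.1.injOn (ht i).1 (ht j).1 this]
  have hβ_surj : Function.Surjective β := by
    intro j
    obtain ⟨l, hlL, rfl⟩ := (hL.existsUnique_apply_eq htrans j).exists
    obtain ⟨s, hs, rfl⟩ := hσ.1.surjOn hlL
    exact ⟨s a, by simp only [β, t_eq s hs]⟩
  refine ⟨Equiv.ofBijective β ⟨hβ_inj, hβ_surj⟩, ?_, fun s hs => ?_⟩
  · change σ (t a) a = a
    rw [show t a = 1 from t_eq 1 hT.1]
    exact mem_stabilizer_iff.mp (Subgroup.mem_inf.mp (hσ.map_one_mem hT.1)).2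
  · rw [mul_inv_eq_iff_eq_mul]
    ext k
    exact (hβ s hs k).symm

end Perm

theorem ict_burnside_count {n : ℕ} [NeZero n]
    (G : Subgroup (Equiv.Perm (Fin n)))
    (htrans : ∀ i : Fin n, ∃ g ∈ G, g 0 = i)
    (H : Subgroup (Equiv.Perm (Fin n)))
    (hH : H = G ⊓ MulAction.stabilizer (Equiv.Perm (Fin n)) (0 : Fin n))
    (N : Subgroup (Equiv.Perm (Fin n)))
    (hN : N = MulAction.stabilizer (Equiv.Perm (Fin n)) (0 : Fin n) ⊓ Subgroup.normalizer (G : Set (Equiv.Perm (Fin n))))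
    -- the hypothesis `K = N_{Sym(n-1)}(G)`
    (hK : {α : Equiv.Perm (Fin n) | α 0 = 0 ∧
        ∃ T L : Set (Equiv.Perm (Fin n)), IsLeftTransversalIn G H T ∧
          IsLeftTransversalIn G H L ∧ (fun g => α * g * α⁻¹) '' T = L} =
      (N : Set (Equiv.Perm (Fin n)))) :
    -- Burnside: (number of isomorphism classes) * |N| = ∑_{x ∈ N} |Fix(x)|
    Nat.card (Quot fun (T L : {S : Set (Equiv.Perm (Fin n)) //
        IsLeftTransversalIn G H S}) =>
      ∃ σ : Equiv.Perm (Fin n) → Equiv.Perm (Fin n), IsLeftIso H T.1 L.1 σ) *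
        Nat.card N =
      ∑ᶠ x : N, Nat.card {T : {S : Set (Equiv.Perm (Fin n)) //
        IsLeftTransversalIn G H S} //
          (fun g => (x : Equiv.Perm (Fin n)) * g * (x : Equiv.Perm (Fin n))⁻¹) '' T.1
            = T.1} := by
  have hNG : N ≤ Subgroup.normalizer (G : Set (Perm (Fin n))) ⊓ Subgroup.normalizer (H : Set _) :=
    hN ▸ hH ▸ fun x hx =>
      ⟨hx.2, Subgroup.inf_normalizer_le_normalizer_inf ⟨hx.2, Subgroup.le_normalizer hx.1⟩⟩
  let _ := conjActionOnTransversals N hNG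
  have hrel : ∀ T L : {S // IsLeftTransversalIn G H S},
      (∃ σ, IsLeftIso H T.1 L.1 σ) ↔ orbitRel N _ T L := by
    intro T L
    rw [orbitRel_apply, mem_orbit_symm, mem_orbit_iff]
    constructor
    · rintro ⟨σ, hσ⟩
      subst hH
      obtain ⟨π, hπ0, hπ⟩ := hσ.exists_perm_conj_eq htrans T.2 L.2
      have himage : (fun g => π * g * π⁻¹) '' T.1 = L.1 :=
        (Set.image_congr hπ).trans hσ.1.image_eq
      have hπN : π ∈ (N : Set (Perm (Fin n))) := hK ▸ ⟨hπ0, T.1, L.1, T.2, L.2, himage⟩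
      exact ⟨⟨π, hπN⟩, Subtype.ext himage⟩
    · rintro ⟨x, rfl⟩
      exact ⟨_, isLeftIso_conj T.1 (hNG x.2).2⟩
  calc _ = Nat.card (orbitRel.Quotient N {S // IsLeftTransversalIn G H S}) * Nat.card N := by
        rw [Nat.card_congr (Quot.congrRight hrel)]; rfl
    _ = ∑ᶠ x : N, Nat.card (fixedBy {S // IsLeftTransversalIn G H S} x) :=
        (finsum_natCard_fixedBy_eq_natCard_orbits_mul_natCard_group _ _).symm
    _ = _ := finsum_congr fun x =>
        Nat.card_congr (Equiv.subtypeEquivRight fun T => Subtype.ext_iff)
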